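/- Let a ∈ ℓ^∞ with ‖a‖_∞ = 1. Then the following are equivalent: (1) r(T_a) < 1; (2) M(|a|) = lim_n sup_j (1/n) Σ_{k=1}^n |a_{k+j-1}| < 1; (3) w(T_a) < 1; (4) there exist C > 0 and λ ∈ (0,1) with ∏_{k=1}^n |a_{k+j-1}| ≤ C λ^n for all n, j ∈ ℕ. -/

import Mathlib

open Filter Finset Topology

/-- The numerical range of the weighted forward shift `T_a` on `ℓ²`:
values `⟨T_a x, x⟩ = ∑ a_k x_k conj (x_{k+1})` over unit vectors `x ∈ ℓ²`. -/
noncomputable def numRange (a : ℕ → ℂ) : Set ℂ :=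
  {z | ∃ x : ℕ → ℂ, (∑' k, ‖x k‖ ^ 2) = (1 : ℝ) ∧
    z = ∑' k, a k * x k * (starRingEnd ℂ) (x (k + 1))}

/-- The numerical radius `w(T_a)` of the weighted forward shift. -/
noncomputable def numRad (a : ℕ → ℂ) : ℝ := sSup ((fun z : ℂ => ‖z‖) '' numRange a)

/-- `a ∈ ℓ^∞`. -/
def IsBddSeq (a : ℕ → ℂ) : Prop := ∃ C : ℝ, ∀ k, ‖a k‖ ≤ C

/-- The uniform norm `‖a‖_∞`. -/
noncomputable def supNorm (a : ℕ → ℂ) : ℝ := ⨆ k, ‖a k‖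

/-- `sup_{j ∈ ℕ} (1/n) ∑_{k=1}^n |a_{k+j-1}|` (0-based indexing). -/
noncomputable def avgSup (a : ℕ → ℂ) (n : ℕ) : ℝ :=
  ⨆ j : ℕ, (∑ k ∈ Finset.range n, ‖a (k + j)‖) / n

/-- `sup_{j ∈ ℕ} (∏_{k=1}^n |a_{k+j-1}|)^{1/n}` (0-based indexing). -/
noncomputable def prodSup (a : ℕ → ℂ) (n : ℕ) : ℝ :=
  ⨆ j : ℕ, (∏ k ∈ Finset.range n, ‖a (k + j)‖) ^ ((1 : ℝ) / n)


open scoped ENNReal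

section Aux

variable {a : ℕ → ℂ}

lemma norm_a_le (hnorm : supNorm a = 1) : ∀ k, ‖a k‖ ≤ 1 := by
  intro k
  by_cases hb : BddAbove (Set.range fun k => ‖a k‖)
  · exact hnorm ▸ le_ciSup hb k
  · exfalso
    rw [supNorm, Real.iSup_of_not_bddAbove hb] at hnorm
    norm_num at hnorm

lemma avg_le_one (ha : ∀ k, ‖a k‖ ≤ 1) (n j : ℕ) :
    (∑ k ∈ Finset.range n, ‖a (k + j)‖) / n ≤ 1 := by
  rcases Nat.eq_zero_or_pos n with h | h
  · simp [h]
  · rw [div_le_one (by exact_mod_cast h)]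
    calc ∑ k ∈ Finset.range n, ‖a (k + j)‖ ≤ ∑ _k ∈ Finset.range n, (1:ℝ) :=
          Finset.sum_le_sum fun i _ => ha _
      _ = n := by simp

lemma avgSup_bdd (ha : ∀ k, ‖a k‖ ≤ 1) (n : ℕ) :
    BddAbove (Set.range fun j => (∑ k ∈ Finset.range n, ‖a (k + j)‖) / n) := by
  refine ⟨1, ?_⟩
  rintro x ⟨j, rfl⟩
  exact avg_le_one ha n j

lemma prod_le_one' (ha : ∀ k, ‖a k‖ ≤ 1) (n j : ℕ) :
    ∏ k ∈ Finset.range n, ‖a (k + j)‖ ≤ 1 :=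
  Finset.prod_le_one (fun i _ => norm_nonneg _) (fun i _ => ha _)

/-- L1 : pointwise AM-GM, prodSup ≤ avgSup for n ≥ 1. -/
lemma prodSup_le_avgSup (ha : ∀ k, ‖a k‖ ≤ 1) {n : ℕ} (hn : 1 ≤ n) :
    prodSup a n ≤ avgSup a n := by
  refine Real.iSup_le (fun j => ?_) (Real.iSup_nonneg fun j => by positivity)
  have hAM := Real.geom_mean_le_arith_mean_weighted (Finset.range n)
      (fun _ => (1:ℝ)/n) (fun k => ‖a (k + j)‖)
      (fun i _ => by positivity)
      (by rw [Finset.sum_const, Finset.card_range, nsmul_eq_mul]; field_simp)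
      (fun i _ => norm_nonneg _)
  rw [Real.finset_prod_rpow _ _ (fun i _ => norm_nonneg _)] at hAM
  have h2 : ∑ i ∈ Finset.range n, (1:ℝ)/n * ‖a (i + j)‖
      = (∑ k ∈ Finset.range n, ‖a (k + j)‖) / n := by
    rw [Finset.sum_div]
    refine Finset.sum_congr rfl fun i _ => by ring
  rw [h2] at hAM
  exact hAM.trans (le_ciSup (avgSup_bdd ha n) j)

lemma r_le_M (ha : ∀ k, ‖a k‖ ≤ 1) {M r : ℝ}
    (hM : Tendsto (avgSup a) atTop (𝓝 M))
    (hr : Tendsto (prodSup a) atTop (𝓝 r)) : r ≤ M := by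
  refine le_of_tendsto_of_tendsto hr hM ?_
  filter_upwards [eventually_ge_atTop 1] with n hn
  exact prodSup_le_avgSup ha hn

/-- L2 : r < 1 implies geometric bound. -/
lemma geom_of_r_lt_one (ha : ∀ k, ‖a k‖ ≤ 1) {r : ℝ}
    (hr : Tendsto (prodSup a) atTop (𝓝 r)) (hr1 : r < 1) :
    ∃ C lam : ℝ, 0 < C ∧ 0 < lam ∧ lam < 1 ∧
      ∀ n j : ℕ, 1 ≤ n → ∏ k ∈ Finset.range n, ‖a (k + j)‖ ≤ C * lam ^ n := by
  have hr0 : 0 ≤ r :=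
    ge_of_tendsto' hr fun n => Real.iSup_nonneg fun j => Real.rpow_nonneg (by positivity) _
  set lam : ℝ := (r + 1) / 2 with hlam
  have hl0 : 0 < lam := by rw [hlam]; linarith
  have hl1 : lam < 1 := by rw [hlam]; linarith
  have hrl : r < lam := by rw [hlam]; linarith
  obtain ⟨N, hN⟩ := (eventually_atTop.mp (hr.eventually_lt_const hrl))
  refine ⟨lam⁻¹ ^ N, lam, by positivity, hl0, hl1, fun n j hn => ?_⟩
  have hClam1 : ∀ m ≤ N, 1 ≤ lam⁻¹ ^ N * lam ^ m := by
    intro m hm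
    have h1 : lam ^ N ≤ lam ^ m := pow_le_pow_of_le_one hl0.le hl1.le hm
    rw [inv_pow, inv_mul_eq_div, le_div_iff₀ (by positivity)]
    linarith
  rcases le_or_gt n N with hnN | hnN
  · calc ∏ k ∈ Finset.range n, ‖a (k + j)‖ ≤ 1 := prod_le_one' ha n j
      _ ≤ lam⁻¹ ^ N * lam ^ n := hClam1 n hnN
  · -- n > N : prodSup a n < lam
    have hps := hN n hnN.le
    have hterm : (∏ k ∈ Finset.range n, ‖a (k + j)‖) ^ ((1:ℝ)/n) ≤ prodSup a n := by
      rw [prodSup]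
      have hb : BddAbove (Set.range fun i : ℕ => (∏ k ∈ Finset.range n, ‖a (k + i)‖) ^ ((1:ℝ)/n)) := by
        refine ⟨1, ?_⟩
        rintro x ⟨i, rfl⟩
        exact Real.rpow_le_one (by positivity) (prod_le_one' ha n i) (by positivity)
      exact le_ciSup hb j
    have hlt : (∏ k ∈ Finset.range n, ‖a (k + j)‖) ^ ((1:ℝ)/n) ≤ lam :=
      (hterm.trans_lt hps).le
    have hn0 : (n:ℝ) ≠ 0 := by exact_mod_cast Nat.one_le_iff_ne_zero.mp hn
    have key : ∏ k ∈ Finset.range n, ‖a (k + j)‖ ≤ lam ^ n := by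
      have h1 : ((∏ k ∈ Finset.range n, ‖a (k + j)‖) ^ ((1:ℝ)/n)) ^ n ≤ lam ^ n :=
        pow_le_pow_left₀ (Real.rpow_nonneg (by positivity) _) hlt n
      rwa [← Real.rpow_natCast ((∏ k ∈ Finset.range n, ‖a (k + j)‖) ^ ((1:ℝ)/n)) n,
        ← Real.rpow_mul (by positivity), one_div, inv_mul_cancel₀ hn0, Real.rpow_one] at h1
    calc ∏ k ∈ Finset.range n, ‖a (k + j)‖ ≤ lam ^ n := key
      _ ≤ lam⁻¹ ^ N * lam ^ n := by
          nlinarith [hClam1 0 (Nat.zero_le N), pow_pos hl0 n, pow_pos (inv_pos.mpr hl0) N]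

end Aux


section Aux2
variable {a : ℕ → ℂ}

/-- L3 : geometric bound implies M < 1. -/
lemma M_lt_one_of_geom (ha : ∀ k, ‖a k‖ ≤ 1) {M C lam : ℝ}
    (hM : Tendsto (avgSup a) atTop (𝓝 M))
    (hC : 0 < C) (hl0 : 0 < lam) (hl1 : lam < 1)
    (hgeom : ∀ n j : ℕ, 1 ≤ n → ∏ k ∈ Finset.range n, ‖a (k + j)‖ ≤ C * lam ^ n) :
    M < 1 := by
  set β : ℝ := (1 + lam) / 2 with hβ
  have hβ0 : 0 < β := by rw [hβ]; linarith
  have hβ1 : β < 1 := by rw [hβ]; linarith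
  have hlβ : lam < β := by rw [hβ]; linarith
  -- choose m ≥ 1 with C * lam ^ m < β ^ m
  obtain ⟨m, hm1, hmβ⟩ : ∃ m : ℕ, 1 ≤ m ∧ C * lam ^ m < β ^ m := by
    have htend : Tendsto (fun m : ℕ => C * (lam / β) ^ m) atTop (𝓝 0) := by
      simpa using (tendsto_pow_atTop_nhds_zero_of_lt_one (by positivity)
        ((div_lt_one hβ0).mpr hlβ)).const_mul C
    obtain ⟨m, hm1, hm2⟩ :=
      ((htend.eventually_lt_const one_pos).and (eventually_ge_atTop 1)).exists
    refine ⟨m, hm2, ?_⟩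
    have hβm : 0 < β ^ m := by positivity
    have := (mul_lt_mul_of_pos_right hm1 hβm)
    rwa [one_mul, mul_assoc, div_pow, div_mul_cancel₀] at this
    positivity
  -- each window of length m contains a small entry
  have hsmall : ∀ j, ∃ i ∈ Finset.range m, ‖a (i + j)‖ ≤ β := by
    intro j
    by_contra hcon
    push_neg at hcon
    have h1 : β ^ m < ∏ i ∈ Finset.range m, ‖a (i + j)‖ := by
      have := Finset.prod_lt_prod_of_nonempty (f := fun _ => β)
        (g := fun i => ‖a (i + j)‖) (s := Finset.range m)
        (fun i _ => hβ0) (fun i hi => hcon i hi)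
        (Finset.nonempty_range_iff.mpr (by omega))
      simpa using this
    exact absurd ((h1.trans_le (hgeom m j hm1)).trans hmβ) (lt_irrefl _)
  -- window sums
  have hwin : ∀ j, ∑ k ∈ Finset.range m, ‖a (k + j)‖ ≤ m - (1 - β) := by
    intro j
    obtain ⟨i0, hi0, hsm⟩ := hsmall j
    rw [← Finset.sum_erase_add _ _ hi0]
    have h1 : ∑ k ∈ (Finset.range m).erase i0, ‖a (k + j)‖ ≤ (m - 1 : ℝ) := by
      calc ∑ k ∈ (Finset.range m).erase i0, ‖a (k + j)‖
          ≤ ∑ _k ∈ (Finset.range m).erase i0, (1:ℝ) := Finset.sum_le_sum fun i _ => ha _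
        _ = ((Finset.range m).erase i0).card := by simp
        _ = (m - 1 : ℕ) := by rw [Finset.card_erase_of_mem hi0, Finset.card_range]
        _ ≤ (m - 1 : ℝ) := by
            push_cast [Nat.cast_sub hm1]
            simp
    linarith
  -- sums over multiples of m
  have hmul : ∀ q j : ℕ, ∑ k ∈ Finset.range (q * m), ‖a (k + j)‖ ≤ q * (m - (1 - β)) := by
    intro q
    induction q with
    | zero => simp
    | succ q ih =>
        intro j
        have hsplit : ∑ k ∈ Finset.range (q * m + m), ‖a (k + j)‖
            = ∑ k ∈ Finset.range (q * m), ‖a (k + j)‖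
              + ∑ i ∈ Finset.range m, ‖a (q * m + i + j)‖ :=
          Finset.sum_range_add (fun k => ‖a (k + j)‖) (q * m) m
        have h2 : ∑ i ∈ Finset.range m, ‖a (q * m + i + j)‖ ≤ m - (1 - β) := by
          have := hwin (q * m + j)
          refine le_trans (le_of_eq ?_) this
          exact Finset.sum_congr rfl fun i _ => by ring_nf
        have : (q + 1) * m = q * m + m := by ring
        rw [this, hsplit]
        have := ih j
        push_cast
        linarith
  -- avgSup at multiples
  set ν : ℝ := 1 - (1 - β) / m with hν
  have hmR : (0:ℝ) < m := by exact_mod_cast Nat.pos_of_ne_zero (by omega)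
  have hν1 : ν < 1 := by
    rw [hν]
    have : 0 < (1 - β) / m := div_pos (by linarith) hmR
    linarith
  have havg : ∀ q : ℕ, 1 ≤ q → avgSup a (q * m) ≤ ν := by
    intro q hq
    refine Real.iSup_le (fun j => ?_) ?_
    · have hqm : (0:ℝ) < (q * m : ℕ) := by
        exact_mod_cast Nat.mul_pos (by omega) (by omega)
      rw [div_le_iff₀ hqm]
      calc ∑ k ∈ Finset.range (q * m), ‖a (k + j)‖ ≤ q * (m - (1 - β)) := hmul q j
        _ = ν * (q * m : ℕ) := by
            push_cast
            rw [hν]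
            field_simp
    · rw [hν]
      have h1 : (1 - β) / m ≤ 1 := by
        rw [div_le_one hmR]
        have : (1:ℝ) ≤ m := by exact_mod_cast hm1
        linarith
      linarith
  -- pass to the limit along q * m
  have htend : Tendsto (fun q : ℕ => avgSup a (q * m)) atTop (𝓝 M) :=
    hM.comp (tendsto_atTop_mono (fun q => Nat.le_mul_of_pos_right q (by omega)) tendsto_id)
  have hMν : M ≤ ν := by
    refine le_of_tendsto htend ?_
    filter_upwards [eventually_ge_atTop 1] with q hq
    exact havg q hq
  linarith


end Aux2

section Aux3
variable {a : ℕ → ℂ}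

lemma sq_summable_of_unit {x : ℕ → ℂ} (hx1 : (∑' k, ‖x k‖ ^ 2) = (1:ℝ)) :
    Summable fun k => ‖x k‖ ^ 2 := by
  by_contra h
  rw [tsum_eq_zero_of_not_summable h] at hx1
  norm_num at hx1

lemma term_norm_le (ha : ∀ k, ‖a k‖ ≤ 1) (x : ℕ → ℂ) (k : ℕ) :
    ‖a k * x k * (starRingEnd ℂ) (x (k + 1))‖ ≤ (‖x k‖ ^ 2 + ‖x (k + 1)‖ ^ 2) / 2 := by
  have h1 : ‖a k * x k * (starRingEnd ℂ) (x (k + 1))‖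
      = ‖a k‖ * ‖x k‖ * ‖x (k + 1)‖ := by simp [norm_mul]
  rw [h1]
  nlinarith [sq_nonneg (‖x k‖ - ‖x (k+1)‖), norm_nonneg (x k), norm_nonneg (x (k+1)),
    norm_nonneg (a k), ha k, mul_nonneg (norm_nonneg (x k)) (norm_nonneg (x (k+1)))]

lemma term_summable (ha : ∀ k, ‖a k‖ ≤ 1) {x : ℕ → ℂ}
    (hx : Summable fun k => ‖x k‖ ^ 2) :
    Summable fun k => a k * x k * (starRingEnd ℂ) (x (k + 1)) :=
  Summable.of_norm_bounded ((hx.add ((summable_nat_add_iff 1).2 hx)).div_const 2) (term_norm_le ha x)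

set_option maxHeartbeats 1000000 in
/-- every element of the numerical range has norm at most 1 -/
lemma numRange_norm_le_one (ha : ∀ k, ‖a k‖ ≤ 1) {z : ℂ} (hz : z ∈ numRange a) :
    ‖z‖ ≤ 1 := by
  obtain ⟨x, hx1, rfl⟩ := hz
  have hx := sq_summable_of_unit hx1
  have hsum := term_summable ha hx
  have hs1 : Summable fun k => ‖x (k + 1)‖ ^ 2 := (summable_nat_add_iff 1).2 hx
  have hb : Summable fun k => (‖x k‖ ^ 2 + ‖x (k + 1)‖ ^ 2) / 2 := (hx.add hs1).div_const 2
  calc ‖∑' k, a k * x k * (starRingEnd ℂ) (x (k + 1))‖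
      ≤ ∑' k, ‖a k * x k * (starRingEnd ℂ) (x (k + 1))‖ := norm_tsum_le_tsum_norm hsum.norm
    _ ≤ ∑' k, (‖x k‖ ^ 2 + ‖x (k + 1)‖ ^ 2) / 2 :=
        Summable.tsum_le_tsum (term_norm_le ha x) hsum.norm hb
    _ ≤ 1 := by
        rw [tsum_div_const, hx.tsum_add hs1]
        have h2 : ∑' k, ‖x (k + 1)‖ ^ 2 ≤ 1 := by
          have := hx.tsum_eq_zero_add
          rw [hx1] at this
          nlinarith [sq_nonneg ‖x 0‖]
        rw [hx1]
        linarith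

lemma numRad_bddAbove (ha : ∀ k, ‖a k‖ ≤ 1) :
    BddAbove ((fun z : ℂ => ‖z‖) '' numRange a) := by
  refine ⟨1, ?_⟩
  rintro w ⟨z, hz, rfl⟩
  exact numRange_norm_le_one ha hz

lemma numRad_nonneg : 0 ≤ numRad a :=
  Real.sSup_nonneg (by rintro w ⟨z, hz, rfl⟩; exact norm_nonneg z)

/-- L5 core : test vectors show  avgSup m ≤ (m+1)/m * numRad. -/
lemma avgSup_le_numRad (ha : ∀ k, ‖a k‖ ≤ 1) {m : ℕ} (hm : 1 ≤ m) :
    avgSup a m ≤ ((m:ℝ) + 1) / m * numRad a := by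
  have hmR : (0:ℝ) < m := by exact_mod_cast hm
  refine Real.iSup_le (fun j => ?_)
    (mul_nonneg (by positivity) numRad_nonneg)
  -- phases
  set φ : ℕ → ℂ := fun i => Nat.rec 1
    (fun i φi => if a (i + j) = 0 then 1 else a (i + j) * φi / (‖a (i + j)‖ : ℂ)) i with hφdef
  have hφ0 : φ 0 = 1 := rfl
  have hφsucc : ∀ i, φ (i + 1) =
      if a (i + j) = 0 then 1 else a (i + j) * φ i / (‖a (i + j)‖ : ℂ) := fun i => rfl
  have hφnorm : ∀ i, ‖φ i‖ = 1 := by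
    intro i
    induction i with
    | zero => simp [hφ0]
    | succ i ih =>
        rw [hφsucc i]
        by_cases h : a (i + j) = 0
        · simp [h]
        · have hne : ‖a (i + j)‖ ≠ 0 := norm_ne_zero_iff.mpr h
          rw [if_neg h, norm_div, norm_mul, ih, Complex.norm_real, Real.norm_eq_abs,
            abs_of_nonneg (norm_nonneg _), mul_one]
          exact div_self hne
  have hkey : ∀ i, a (i + j) * φ i * (starRingEnd ℂ) (φ (i + 1)) = (‖a (i + j)‖ : ℂ) := by
    intro i
    by_cases h : a (i + j) = 0
    · simp [h]
    · have hne : (‖a (i + j)‖ : ℂ) ≠ 0 := by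
        simpa using norm_ne_zero_iff.mpr h
      rw [hφsucc i, if_neg h, map_div₀, Complex.conj_ofReal, map_mul]
      have h1 : a (i + j) * (starRingEnd ℂ) (a (i + j)) = ((‖a (i + j)‖:ℝ) : ℂ) ^ 2 :=
        Complex.mul_conj' _
      have h2 : φ i * (starRingEnd ℂ) (φ i) = 1 := by
        have := Complex.mul_conj' (φ i)
        rw [hφnorm i] at this
        simpa using this
      have h3 : a (i + j) * φ i * ((starRingEnd ℂ) (a (i + j)) * (starRingEnd ℂ) (φ i)
            / (‖a (i + j)‖ : ℂ))
          = (a (i + j) * (starRingEnd ℂ) (a (i + j))) * (φ i * (starRingEnd ℂ) (φ i))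
            / (‖a (i + j)‖ : ℂ) := by ring
      rw [h3, h1, h2, mul_one, sq, mul_div_assoc, div_self hne, mul_one]
  -- the vector
  set s : ℝ := Real.sqrt (m + 1) with hs
  have hs0 : 0 < s := Real.sqrt_pos.mpr (by positivity)
  have hss : s * s = (m:ℝ) + 1 := Real.mul_self_sqrt (by positivity)
  set x : ℕ → ℂ := fun k => if j ≤ k ∧ k < j + (m + 1) then φ (k - j) / (s:ℂ) else 0 with hx
  have hxin : ∀ k, j ≤ k → k < j + (m+1) → x k = φ (k - j) / (s:ℂ) := by
    intro k h1 h2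
    rw [hx]
    exact if_pos (show j ≤ k ∧ k < j + (m+1) from ⟨h1, h2⟩)
  have hxzero : ∀ k, ¬(j ≤ k ∧ k < j + (m+1)) → x k = 0 := by
    intro k h; rw [hx]; exact if_neg h
  have hxnorm : ∀ k, j ≤ k → k < j + (m+1) → ‖x k‖ ^ 2 = 1 / ((m:ℝ)+1) := by
    intro k h1 h2
    rw [hxin k h1 h2, norm_div, hφnorm, Complex.norm_real, Real.norm_eq_abs,
      abs_of_nonneg hs0.le, div_pow, one_pow, sq, hss]
  -- unit vector
  have hx1 : (∑' k, ‖x k‖ ^ 2) = (1:ℝ) := by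
    rw [tsum_eq_sum (s := Finset.Ico j (j + (m+1)))
      (fun k hk => by rw [hxzero k (by simpa [Finset.mem_Ico] using hk)]; simp)]
    have he : ∑ k ∈ Finset.Ico j (j + (m+1)), ‖x k‖ ^ 2
        = ∑ _k ∈ Finset.Ico j (j + (m+1)), 1 / ((m:ℝ)+1) := by
      refine Finset.sum_congr rfl fun k hk => ?_
      rw [Finset.mem_Ico] at hk
      exact hxnorm k hk.1 hk.2
    rw [he, Finset.sum_const, Nat.card_Ico]
    have h3 : (j + (m+1) - j : ℕ) = (m+1 : ℕ) := by omega
    rw [h3]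
    simp only [nsmul_eq_mul]
    push_cast
    field_simp
  -- the value
  set val : ℝ := (∑ k ∈ Finset.range m, ‖a (k + j)‖) / ((m:ℝ) + 1) with hvaldef
  have hval0 : 0 ≤ val := by positivity
  have hval : (∑' k, a k * x k * (starRingEnd ℂ) (x (k + 1))) = (val : ℂ) := by
    rw [tsum_eq_sum (s := Finset.Ico j (j + m)) (fun k hk => ?_)]
    · have he : ∑ k ∈ Finset.Ico j (j + m), a k * x k * (starRingEnd ℂ) (x (k+1))
          = ∑ k ∈ Finset.Ico j (j + m), ((‖a k‖ / ((m:ℝ)+1) : ℝ) : ℂ) := by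
        refine Finset.sum_congr rfl fun k hk => ?_
        rw [Finset.mem_Ico] at hk
        obtain ⟨h1, h2⟩ := hk
        have hxk : x k = φ (k - j) / (s:ℂ) := hxin k h1 (by omega)
        have hxk1 : x (k+1) = φ (k + 1 - j) / (s:ℂ) := hxin (k+1) (by omega) (by omega)
        have hi1 : k + 1 - j = (k - j) + 1 := by omega
        have hkj : (k - j) + j = k := by omega
        have hk2 := hkey (k - j)
        rw [hkj] at hk2
        have hsC : ((s:ℂ)) * ((s:ℂ)) = (((m:ℝ) + 1 : ℝ) : ℂ) := by
          rw [← Complex.ofReal_mul, hss]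
        calc a k * x k * (starRingEnd ℂ) (x (k+1))
            = (a k * φ (k - j) * (starRingEnd ℂ) (φ ((k - j) + 1))) / ((s:ℂ) * (s:ℂ)) := by
              rw [hxk, hxk1, hi1, map_div₀, Complex.conj_ofReal]
              ring
          _ = ((‖a k‖ : ℂ)) / (((m:ℝ) + 1 : ℝ) : ℂ) := by rw [hk2, hsC]
          _ = ((‖a k‖ / ((m:ℝ)+1) : ℝ) : ℂ) := by push_cast; ring
      rw [he]
      have he2 : ∑ k ∈ Finset.Ico j (j + m), (‖a k‖ / ((m:ℝ)+1))
          = val := by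
        rw [Finset.sum_Ico_eq_sum_range]
        have h3 : j + m - j = m := by omega
        rw [h3, hvaldef, Finset.sum_div]
        exact Finset.sum_congr rfl fun i _ => by rw [add_comm j i]
      rw [← he2]
      push_cast
      ring
    · rw [Finset.mem_Ico] at hk
      push_neg at hk
      rcases lt_or_ge k j with h | h
      · rw [hxzero k (by omega)]; ring
      · have h5 : x (k + 1) = 0 := hxzero _ (by omega)
        rw [h5]; simp
  -- membership and conclusion
  have hmem : val ∈ (fun z : ℂ => ‖z‖) '' numRange a := by
    refine ⟨(val : ℂ), ⟨x, hx1, hval.symm⟩, ?_⟩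
    simp [Complex.norm_real, abs_of_nonneg hval0]
  have hle : val ≤ numRad a := le_csSup (numRad_bddAbove ha) hmem
  rw [div_le_iff₀ hmR]
  rw [hvaldef, div_le_iff₀ (by positivity : (0:ℝ) < (m:ℝ)+1)] at hle
  calc ∑ k ∈ Finset.range m, ‖a (k + j)‖ ≤ numRad a * ((m:ℝ)+1) := hle
    _ = ((m:ℝ)+1)/m * numRad a * m := by field_simp
end Aux3


section Aux4

lemma tsum_shift {E : Type*} [AddCommGroup E] [TopologicalSpace E]
    [IsTopologicalAddGroup E] [T2Space E] {f : ℕ → E} (n : ℕ) (hf : Summable f)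
    (h0 : ∀ k < n, f k = 0) : ∑' k, f k = ∑' m, f (m + n) := by
  rw [← hf.sum_add_tsum_nat_add n,
    Finset.sum_eq_zero (fun i hi => h0 i (Finset.mem_range.mp hi)), zero_add]

def shiftOp (a : ℕ → ℂ) (v : ℕ → ℂ) : ℕ → ℂ :=
  fun k => Nat.rec 0 (fun m _ => a m * v m) k

variable {a : ℕ → ℂ}

lemma shiftOp_zero (v : ℕ → ℂ) : shiftOp a v 0 = 0 := rfl
lemma shiftOp_succ (v : ℕ → ℂ) (m : ℕ) : shiftOp a v (m + 1) = a m * v m := rfl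

lemma shiftOp_iter_low : ∀ n : ℕ, ∀ v : ℕ → ℂ, ∀ k < n, (shiftOp a)^[n] v k = 0 := by
  intro n
  induction n with
  | zero => intro v k hk; omega
  | succ n ih =>
      intro v k hk
      rw [Function.iterate_succ_apply']
      match k with
      | 0 => rfl
      | (l+1) =>
          rw [shiftOp_succ, ih v l (by omega), mul_zero]

lemma shiftOp_iter_formula : ∀ n : ℕ, ∀ v : ℕ → ℂ, ∀ m : ℕ,
    (shiftOp a)^[n] v (m + n) = (∏ i ∈ Finset.range n, a (m + i)) * v m := by
  intro n
  induction n with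
  | zero => intro v m; simp
  | succ n ih =>
      intro v m
      have h1 : m + (n + 1) = (m + n) + 1 := rfl
      rw [h1, Function.iterate_succ_apply', shiftOp_succ, ih v m,
        Finset.prod_range_succ]
      ring

lemma tsum_sq_iter_le (ha : ∀ k, ‖a k‖ ≤ 1) {v : ℕ → ℂ}
    (hv : Summable fun k => ‖v k‖ ^ 2) (n : ℕ) {K : ℝ} (hK0 : 0 ≤ K)
    (hKn : ∀ m, ∏ i ∈ Finset.range n, ‖a (m + i)‖ ≤ K) :
    (Summable fun k => ‖(shiftOp a)^[n] v k‖ ^ 2) ∧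
      ∑' k, ‖(shiftOp a)^[n] v k‖ ^ 2 ≤ K ^ 2 * ∑' k, ‖v k‖ ^ 2 := by
  have hterm : ∀ m, ‖(shiftOp a)^[n] v (m + n)‖ ^ 2 ≤ K ^ 2 * ‖v m‖ ^ 2 := by
    intro m
    rw [shiftOp_iter_formula n v m, norm_mul]
    have h1 : ‖∏ i ∈ Finset.range n, a (m + i)‖ = ∏ i ∈ Finset.range n, ‖a (m + i)‖ :=
      norm_prod _ _
    have h2 : ‖∏ i ∈ Finset.range n, a (m + i)‖ ≤ K := h1 ▸ hKn m
    have h3 : ‖∏ i ∈ Finset.range n, a (m + i)‖ * ‖v m‖ ≤ K * ‖v m‖ :=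
      mul_le_mul_of_nonneg_right h2 (norm_nonneg _)
    calc (‖∏ i ∈ Finset.range n, a (m + i)‖ * ‖v m‖) ^ 2 ≤ (K * ‖v m‖) ^ 2 :=
          pow_le_pow_left₀ (by positivity) h3 2
      _ = K ^ 2 * ‖v m‖ ^ 2 := by ring
  have hsm : Summable fun m => ‖(shiftOp a)^[n] v (m + n)‖ ^ 2 :=
    Summable.of_nonneg_of_le (fun m => by positivity) hterm (hv.mul_left (K ^ 2))
  have hsum : Summable fun k => ‖(shiftOp a)^[n] v k‖ ^ 2 := (summable_nat_add_iff n).1 hsm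
  refine ⟨hsum, ?_⟩
  rw [tsum_shift n hsum (fun k hk => by rw [shiftOp_iter_low n v k hk]; simp)]
  calc ∑' m, ‖(shiftOp a)^[n] v (m + n)‖ ^ 2 ≤ ∑' m, K ^ 2 * ‖v m‖ ^ 2 :=
        Summable.tsum_le_tsum hterm hsm (hv.mul_left (K ^ 2))
    _ = K ^ 2 * ∑' k, ‖v k‖ ^ 2 := tsum_mul_left

lemma mem_l2 {v : ℕ → ℂ} (hv : Summable fun k => ‖v k‖ ^ 2) :
    Memℓp v 2 := by
  apply memℓp_gen
  simpa [ENNReal.toReal_ofNat, Real.rpow_natCast] using hv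

lemma summable_sq_of_mem (f : lp (fun _ : ℕ => ℂ) 2) :
    Summable fun k => ‖f k‖ ^ 2 := by
  have h := lp.memℓp f
  rw [memℓp_gen_iff (by norm_num : 0 < (2:ℝ≥0∞).toReal)] at h
  simpa [ENNReal.toReal_ofNat, Real.rpow_natCast] using h

lemma l2_norm_sq (f : lp (fun _ : ℕ => ℂ) 2) : ‖f‖ ^ 2 = ∑' k, ‖f k‖ ^ 2 := by
  have h := lp.norm_rpow_eq_tsum (p := 2) (by norm_num) f
  simpa [ENNReal.toReal_ofNat, Real.rpow_natCast] using h

lemma l2_inner (f g : lp (fun _ : ℕ => ℂ) 2) :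
    (inner ℂ f g : ℂ) = ∑' k, (starRingEnd ℂ) (f k) * g k := by
  rw [lp.inner_eq_tsum]
  simp [RCLike.inner_apply']
  exact tsum_congr fun i => mul_comm _ _

set_option maxHeartbeats 1600000 in
/-- L4: geometric decay of window products implies numerical radius < 1. -/
lemma numRad_lt_one_of_geom (ha : ∀ k, ‖a k‖ ≤ 1) {C lam : ℝ} (hC : 0 < C)
    (hl0 : 0 < lam) (hl1 : lam < 1)
    (hgeom : ∀ n j : ℕ, 1 ≤ n → ∏ k ∈ Finset.range n, ‖a (k + j)‖ ≤ C * lam ^ n)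
    (hB : ∀ z ∈ numRange a, ‖z‖ ≤ 1)
    (hUnit : ∀ {x : ℕ → ℂ}, (∑' k, ‖x k‖ ^ 2) = (1:ℝ) → Summable fun k => ‖x k‖ ^ 2) :
    numRad a < 1 := by
  obtain ⟨n, hn1, hKhalf⟩ : ∃ n : ℕ, 1 ≤ n ∧ C * lam ^ n ≤ 1 / 2 := by
    have ht : Tendsto (fun n : ℕ => C * lam ^ n) atTop (𝓝 0) := by
      simpa using (tendsto_pow_atTop_nhds_zero_of_lt_one hl0.le hl1).const_mul C
    obtain ⟨n, h1, h2⟩ :=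
      ((eventually_ge_atTop 1).and (ht.eventually_lt_const (by norm_num : (0:ℝ) < 1/2))).exists
    exact ⟨n, h1, h2.le⟩
  set ε : ℝ := 1 / (9 * (n : ℝ) ^ 2) with hε
  have hnR : (1 : ℝ) ≤ n := by exact_mod_cast hn1
  have hε0 : 0 < ε := by positivity
  have hε19 : ε ≤ 1 / 9 := by
    rw [hε, div_le_div_iff₀ (by positivity) (by norm_num)]
    nlinarith
  have hnε : (n : ℝ) ^ 2 * ε = 1 / 9 := by
    rw [hε]; field_simp
  have goal_bound : ∀ w ∈ (fun z : ℂ => ‖z‖) '' numRange a, w ≤ 1 - ε := by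
    rintro w ⟨z, hzmem, rfl⟩
    obtain ⟨x, hx1, hzx⟩ := hzmem
    by_contra hcon
    push_neg at hcon
    have hz1 : ‖z‖ ≤ 1 := hB z ⟨x, hx1, hzx⟩
    have hz0 : z ≠ 0 := by
      intro h
      rw [h, norm_zero] at hcon
      linarith
    have hxsum : Summable fun k => ‖x k‖ ^ 2 := hUnit hx1
    -- bundled vectors
    have hVmem : ∀ j : ℕ, Memℓp ((shiftOp a)^[j] x) 2 := fun j =>
      mem_l2 (tsum_sq_iter_le ha hxsum j zero_le_one
        (fun m => Finset.prod_le_one (fun i _ => norm_nonneg _) (fun i _ => ha _))).1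
    set X : lp (fun _ : ℕ => ℂ) 2 := ⟨x, mem_l2 hxsum⟩ with hXdef
    set V : ℕ → lp (fun _ : ℕ => ℂ) 2 := fun j => ⟨(shiftOp a)^[j] x, hVmem j⟩ with hVdef
    have hXnorm : ‖X‖ = 1 := by
      have h := l2_norm_sq X
      have h2 : ‖X‖ ^ 2 = 1 := by rw [h]; exact hx1
      rw [← Real.sqrt_one, ← h2, Real.sqrt_sq (norm_nonneg X)]
    have hVle : ∀ j, ‖V j‖ ≤ 1 := by
      intro j
      have h := l2_norm_sq (V j)
      have h2 := (tsum_sq_iter_le ha hxsum j zero_le_one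
        (fun m => Finset.prod_le_one (fun i _ => norm_nonneg _) (fun i _ => ha _))).2
      rw [hx1] at h2
      have h3 : ‖V j‖ ^ 2 ≤ 1 := by rw [h]; simpa using h2
      nlinarith [norm_nonneg (V j)]
    have hVn : ‖V n‖ ≤ 1 / 2 := by
      have hKn' : ∀ m, ∏ i ∈ Finset.range n, ‖a (m + i)‖ ≤ C * lam ^ n := by
        intro m
        calc ∏ i ∈ Finset.range n, ‖a (m + i)‖
            = ∏ i ∈ Finset.range n, ‖a (i + m)‖ :=
              Finset.prod_congr rfl fun i _ => by rw [add_comm]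
          _ ≤ C * lam ^ n := hgeom n m hn1
      have h := l2_norm_sq (V n)
      have h2 := (tsum_sq_iter_le ha hxsum n (by positivity) hKn').2
      rw [hx1, mul_one] at h2
      have h3 : ‖V n‖ ^ 2 ≤ (1/2) ^ 2 := by
        rw [h]
        refine le_trans h2 ?_
        nlinarith [mul_pos hC (pow_pos hl0 n)]
      nlinarith [norm_nonneg (V n)]
    -- phase
    set u : ℂ := (starRingEnd ℂ) z / ((‖z‖ : ℝ) : ℂ) with hu
    have hznR : (‖z‖ : ℝ) ≠ 0 := norm_ne_zero_iff.mpr hz0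
    have hznC : ((‖z‖ : ℝ) : ℂ) ≠ 0 := Complex.ofReal_ne_zero.mpr hznR
    have hunorm : ‖u‖ = 1 := by
      rw [hu, norm_div, RCLike.norm_conj]
      rw [Complex.norm_real, Real.norm_eq_abs, abs_of_nonneg (norm_nonneg z)]
      exact div_self hznR
    have huz : u * z = ((‖z‖ : ℝ) : ℂ) := by
      rw [hu, div_mul_eq_mul_div, mul_comm, Complex.mul_conj']
      rw [sq, mul_div_assoc, div_self hznC, mul_one]
    set W : ℕ → lp (fun _ : ℕ => ℂ) 2 := fun j => (u ^ j) • V j with hWdef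
    have hW0 : W 0 = X := by
      rw [hWdef]
      simp only [pow_zero, one_smul]
      exact Subtype.ext rfl
    have hWnorm : ∀ j, ‖W j‖ = ‖V j‖ := by
      intro j
      rw [hWdef]
      simp only [norm_smul, norm_pow, hunorm, one_pow, one_mul]
    -- the inner product identity
    have hinner : (inner ℂ X (W 1) : ℂ) = ((‖z‖ : ℝ) : ℂ) := by
      rw [l2_inner]
      set g : ℕ → ℂ := fun k => (starRingEnd ℂ) (x k) * (u * shiftOp a x k) with hg
      have hcoe : ∀ k, (starRingEnd ℂ) (X k) * (W 1 : lp (fun _ : ℕ => ℂ) 2) k = g k := by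
        intro k
        have h1 : (W 1 : lp (fun _ : ℕ => ℂ) 2) k = u * shiftOp a x k := by
          rw [hWdef]
          have := lp.coeFn_smul (u ^ 1) (V 1)
          calc (((u ^ 1) • V 1 : lp (fun _ : ℕ => ℂ) 2) : ℕ → ℂ) k
              = ((u ^ 1) • ((V 1 : lp (fun _ : ℕ => ℂ) 2) : ℕ → ℂ)) k := by rw [this]
            _ = u * shiftOp a x k := by
                simp only [Pi.smul_apply, pow_one, smul_eq_mul]
                rfl
        rw [h1]
      have hgsum : Summable g := by
        have := lp.summable_inner (𝕜 := ℂ) X (W 1)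
        refine this.congr fun k => ?_
        rw [RCLike.inner_apply']
        exact hcoe k
      calc ∑' k, (starRingEnd ℂ) (X k) * (W 1 : lp (fun _ : ℕ => ℂ) 2) k
          = ∑' k, g k := tsum_congr hcoe
        _ = ∑' m, g (m + 1) := by
            refine tsum_shift 1 hgsum fun k hk => ?_
            interval_cases k
            rw [hg]
            simp only
            rw [shiftOp_zero, mul_zero, mul_zero]
        _ = ∑' m, u * (a m * x m * (starRingEnd ℂ) (x (m + 1))) := by
            refine tsum_congr fun m => ?_
            rw [hg]
            simp only
            rw [shiftOp_succ]
            ring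
        _ = u * ∑' m, a m * x m * (starRingEnd ℂ) (x (m + 1)) := tsum_mul_left
        _ = u * z := by rw [← hzx]
        _ = ((‖z‖ : ℝ) : ℂ) := huz
    have hre : RCLike.re (inner ℂ X (W 1) : ℂ) = ‖z‖ := by
      rw [hinner]
      simp [Complex.ofReal_re]
    -- distance estimate
    have hdiff : ‖W 1 - X‖ ^ 2 ≤ 2 * ε := by
      have hexp := norm_sub_sq (𝕜 := ℂ) (W 1) X
      have hconjre : RCLike.re (inner ℂ (W 1) X : ℂ) = ‖z‖ := by
        rw [← inner_conj_symm (W 1) X, RCLike.conj_re]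
        exact hre
      rw [hconjre, hXnorm] at hexp
      have hW1 : ‖W 1‖ ≤ 1 := by rw [hWnorm 1]; exact hVle 1
      nlinarith [norm_nonneg (W 1)]
    -- the shift as a map on lp
    have hSmem : ∀ f : lp (fun _ : ℕ => ℂ) 2, Memℓp (shiftOp a f) 2 := by
      intro f
      refine mem_l2 ?_
      have h := (tsum_sq_iter_le ha (summable_sq_of_mem f) 1 zero_le_one
        (fun m => by simpa using ha m)).1
      simpa using h
    set S : lp (fun _ : ℕ => ℂ) 2 → lp (fun _ : ℕ => ℂ) 2 :=
      fun f => ⟨shiftOp a f, hSmem f⟩ with hSdef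
    have hSsub : ∀ f g : lp (fun _ : ℕ => ℂ) 2, S (f - g) = S f - S g := by
      intro f g
      refine Subtype.ext ?_
      have hfg := lp.coeFn_sub f g
      have hfg2 := lp.coeFn_sub (S f) (S g)
      funext k
      rw [hSdef]
      show shiftOp a ((f - g : lp (fun _ : ℕ => ℂ) 2) : ℕ → ℂ) k
          = ((S f - S g : lp (fun _ : ℕ => ℂ) 2) : ℕ → ℂ) k
      rw [hfg2, hfg]
      match k with
      | 0 => show shiftOp a _ 0 = shiftOp a f 0 - shiftOp a g 0; simp [shiftOp_zero]
      | (l+1) =>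
          simp only [Pi.sub_apply, shiftOp_succ]
          show a l * ((f : ℕ → ℂ) l - (g : ℕ → ℂ) l) = shiftOp a f (l+1) - shiftOp a g (l+1)
          rw [shiftOp_succ, shiftOp_succ]
          ring
    have hSsmul : ∀ (c : ℂ) (f : lp (fun _ : ℕ => ℂ) 2), S (c • f) = c • S f := by
      intro c f
      refine Subtype.ext ?_
      have hfc := lp.coeFn_smul c f
      have hfc2 := lp.coeFn_smul c (S f)
      funext k
      rw [hSdef]
      show shiftOp a ((c • f : lp (fun _ : ℕ => ℂ) 2) : ℕ → ℂ) k
          = ((c • S f : lp (fun _ : ℕ => ℂ) 2) : ℕ → ℂ) k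
      rw [hfc2, hfc]
      match k with
      | 0 => show shiftOp a _ 0 = c * shiftOp a f 0; simp [shiftOp_zero]
      | (l+1) =>
          simp only [Pi.smul_apply, shiftOp_succ, smul_eq_mul]
          show a l * (c * (f : ℕ → ℂ) l) = c * shiftOp a f (l+1)
          rw [shiftOp_succ]
          ring
    have hScontr : ∀ f : lp (fun _ : ℕ => ℂ) 2, ‖S f‖ ≤ ‖f‖ := by
      intro f
      have h := (tsum_sq_iter_le ha (summable_sq_of_mem f) 1 zero_le_one
        (fun m => by simpa using ha m)).2
      rw [one_pow, one_mul] at h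
      have h1 := l2_norm_sq (S f)
      have h2 := l2_norm_sq f
      have h3 : ‖S f‖ ^ 2 ≤ ‖f‖ ^ 2 := by
        rw [h1, h2]
        simpa using h
      nlinarith [norm_nonneg (S f), norm_nonneg f]
    have hVsucc : ∀ j, V (j + 1) = S (V j) := by
      intro j
      refine Subtype.ext ?_
      show (shiftOp a)^[j+1] x = shiftOp a ((shiftOp a)^[j] x)
      exact Function.iterate_succ_apply' (shiftOp a) j x
    have hWsucc : ∀ j, W (j + 1) = u • S (W j) := by
      intro j
      rw [hWdef]
      simp only
      rw [hVsucc j, hSsmul (u ^ j) (V j), smul_smul, ← pow_succ']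
    -- increments are contractions of the first increment
    have hDle : ∀ j, ‖W (j + 1) - W j‖ ≤ ‖W 1 - X‖ := by
      intro j
      induction j with
      | zero => rw [hW0]
      | succ j ih =>
          rw [hWsucc (j + 1), hWsucc j, ← smul_sub, ← hSsub]
          rw [norm_smul, hunorm, one_mul]
          rw [hWsucc j] at ih
          exact (hScontr _).trans ih
    have htel : ∀ j : ℕ, ‖W j - X‖ ≤ j * ‖W 1 - X‖ := by
      intro j
      induction j with
      | zero => rw [hW0]; simp
      | succ j ih =>
          have h1 : W (j+1) - X = (W (j+1) - W j) + (W j - X) := by abel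
          rw [h1]
          refine (norm_add_le _ _).trans ?_
          push_cast
          have := hDle j
          linarith
    -- contradiction
    set d : ℝ := ‖W 1 - X‖ with hd
    have hd0 : 0 ≤ d := norm_nonneg _
    have hnd : 1 / 2 ≤ (n : ℝ) * d := by
      have h1 : ‖X‖ - ‖W n‖ ≤ ‖X - W n‖ := norm_sub_norm_le X (W n)
      rw [norm_sub_rev] at h1
      have h2 := htel n
      have h3 : ‖W n‖ ≤ 1 / 2 := by rw [hWnorm n]; exact hVn
      rw [hXnorm] at h1
      linarith
    have hd2 : d ^ 2 ≤ 2 * ε := hdiff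
    have h4 : (1/2 : ℝ) * (1/2) ≤ ((n:ℝ) * d) * ((n:ℝ) * d) :=
      mul_le_mul hnd hnd (by norm_num) (by positivity)
    have h5 : ((n:ℝ) * d) * ((n:ℝ) * d) = (n:ℝ)^2 * d^2 := by ring
    have h6 : (n:ℝ)^2 * d^2 ≤ (n:ℝ)^2 * (2 * ε) :=
      mul_le_mul_of_nonneg_left hd2 (by positivity)
    have h7 : (n:ℝ)^2 * (2*ε) = 2/9 := by
      rw [show (n:ℝ)^2 * (2*ε) = 2 * ((n:ℝ)^2 * ε) by ring, hnε]
      norm_num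
    rw [h5] at h4
    rw [h7] at h6
    norm_num at h4
    linarith
  have hfin : numRad a ≤ 1 - ε := Real.sSup_le goal_bound (by linarith)
  linarith

end Aux4


theorem stmt17 (a : ℕ → ℂ) (hnorm : supNorm a = 1) (M r : ℝ)
    (hM : Tendsto (avgSup a) atTop (𝓝 M))
    (hr : Tendsto (prodSup a) atTop (𝓝 r)) :
    ((r < 1) ↔ (M < 1)) ∧ ((M < 1) ↔ (numRad a < 1)) ∧
    ((numRad a < 1) ↔ ∃ C lam : ℝ, 0 < C ∧ 0 < lam ∧ lam < 1 ∧
      ∀ n j : ℕ, 1 ≤ n → ∏ k ∈ Finset.range n, ‖a (k + j)‖ ≤ C * lam ^ n) := by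
  have ha : ∀ k, ‖a k‖ ≤ 1 := norm_a_le hnorm
  have hP2P1 : M < 1 → r < 1 := fun h => lt_of_le_of_lt (r_le_M ha hM hr) h
  have hP1P4 : r < 1 → (∃ C lam : ℝ, 0 < C ∧ 0 < lam ∧ lam < 1 ∧
      ∀ n j : ℕ, 1 ≤ n → ∏ k ∈ Finset.range n, ‖a (k + j)‖ ≤ C * lam ^ n) :=
    geom_of_r_lt_one ha hr
  have hP4P2 : (∃ C lam : ℝ, 0 < C ∧ 0 < lam ∧ lam < 1 ∧
      ∀ n j : ℕ, 1 ≤ n → ∏ k ∈ Finset.range n, ‖a (k + j)‖ ≤ C * lam ^ n) → M < 1 := by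
    rintro ⟨C, lam, hC, hl0, hl1, hg⟩
    exact M_lt_one_of_geom ha hM hC hl0 hl1 hg
  have hP4P3 : (∃ C lam : ℝ, 0 < C ∧ 0 < lam ∧ lam < 1 ∧
      ∀ n j : ℕ, 1 ≤ n → ∏ k ∈ Finset.range n, ‖a (k + j)‖ ≤ C * lam ^ n) →
      numRad a < 1 := by
    rintro ⟨C, lam, hC, hl0, hl1, hg⟩
    exact numRad_lt_one_of_geom ha hC hl0 hl1 hg
      (fun z hz => numRange_norm_le_one ha hz)
      (fun {x} hx => sq_summable_of_unit hx)
  have hP3P2 : numRad a < 1 → M < 1 := by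
    intro h3
    have hMle : M ≤ numRad a := by
      have h0 : Tendsto (fun m : ℕ => 1 + 1 / (m:ℝ)) atTop (𝓝 1) := by
        simpa using
          (tendsto_const_nhds (x := (1:ℝ)) (f := atTop)).add tendsto_one_div_atTop_nhds_zero_nat
      have h2 : Tendsto (fun m : ℕ => ((m:ℝ) + 1) / m) atTop (𝓝 1) := by
        refine h0.congr' ?_
        filter_upwards [eventually_ge_atTop 1] with m hm
        have hmR : (0:ℝ) < m := by exact_mod_cast hm
        field_simp
      have h1 : Tendsto (fun m : ℕ => ((m:ℝ) + 1) / m * numRad a) atTop (𝓝 (numRad a)) := by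
        simpa using h2.mul_const (numRad a)
      refine le_of_tendsto_of_tendsto hM h1 ?_
      filter_upwards [eventually_ge_atTop 1] with m hm
      exact avgSup_le_numRad ha hm
    linarith
  exact ⟨⟨fun h1 => hP4P2 (hP1P4 h1), hP2P1⟩,
    ⟨fun h2 => hP4P3 (hP1P4 (hP2P1 h2)), hP3P2⟩,
    ⟨fun h3 => hP1P4 (hP2P1 (hP3P2 h3)), hP4P3⟩⟩
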